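/- Let H be a graph in W₂ without isolated vertices, let x be a vertex of H, and let G be obtained from H by adding three new vertices a, b, c, joining a to b and to every neighbor of x, joining b to c, and joining c to x. Then α(G) = α(H) + 1, and G is well-covered. -/

import Mathlib

open Finset
open Classical

noncomputable section

variable {V : Type*}

/-- An (abstract) simplicial complex on `V`, given as a finite set of finite faces:
nonvoid (contains the empty face) and closed under taking subsets. -/
def IsComplex (Δ : Finset (Finset V)) : Prop :=
  ∅ ∈ Δ ∧ ∀ F ∈ Δ, ∀ H ⊆ F, H ∈ Δ

/-- The reduced Euler characteristic `χ̃(Δ) = Σ_{F ∈ Δ} (-1)^{|F| - 1}`. -/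
def chiT (Δ : Finset (Finset V)) : ℤ :=
  ∑ F ∈ Δ, (-1 : ℤ) ^ (F.card + 1)

/-- The link of a face `F` in `Δ`. -/
def link (Δ : Finset (Finset V)) (F : Finset V) : Finset (Finset V) :=
  Δ.filter (fun H => H ∪ F ∈ Δ ∧ H ∩ F = ∅)

/-- The facets (maximal faces) of `Δ`. -/
def facets (Δ : Finset (Finset V)) : Finset (Finset V) :=
  Δ.filter (fun F => ∀ H ∈ Δ, F ⊆ H → F = H)

/-- `Δ` is pure: all facets have the same cardinality. -/
def PureC (Δ : Finset (Finset V)) : Prop :=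
  ∀ F ∈ facets Δ, ∀ H ∈ facets Δ, F.card = H.card

/-- One more than the dimension of `Δ`: the maximal cardinality of a face. -/
def maxCard (Δ : Finset (Finset V)) : ℕ := Δ.sup Finset.card

/-- The dimension of `Δ` as an integer (`-1` for `Δ = {∅}`). -/
def dimC (Δ : Finset (Finset V)) : ℤ := (maxCard Δ : ℤ) - 1

/-- `Δ` is an Euler complex: pure, and every link has reduced Euler characteristic
`(-1)^{dim}` (note `(-1)^{dim lk} = (-1)^{maxCard lk + 1}`). -/
def Eulerian (Δ : Finset (Finset V)) : Prop :=
  PureC Δ ∧ ∀ F ∈ Δ, chiT (link Δ F) = (-1 : ℤ) ^ (maxCard (link Δ F) + 1)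

/-- `Δ` is semi-Eulerian: the link of each vertex is Eulerian. -/
def SemiEulerian (Δ : Finset (Finset V)) : Prop :=
  ∀ x : V, {x} ∈ Δ → Eulerian (link Δ {x})

/-- The independence complex of a graph `G`: faces are the independent sets. -/
def indepC (G : SimpleGraph V) [Fintype V] : Finset (Finset V) :=
  Finset.univ.filter (fun s => ∀ a ∈ s, ∀ b ∈ s, ¬ G.Adj a b)

/-- The independence number `α(G)`. -/
def indNum (G : SimpleGraph V) [Fintype V] : ℕ := (indepC G).sup Finset.card

/-- `G` is well-covered: every maximal independent set has cardinality `α(G)`. -/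
def WellCovered (G : SimpleGraph V) [Fintype V] : Prop :=
  ∀ s ∈ indepC G, (∀ t ∈ indepC G, s ⊆ t → s = t) → s.card = indNum G

/-- The vertex set of the localization `G_S = G \ (S ∪ N_G(S))`. -/
def locSet (G : SimpleGraph V) (S : Finset V) : Set V :=
  {v | v ∉ S ∧ ∀ u ∈ S, ¬ G.Adj v u}

/-- The localization `G_S`, as an induced subgraph. -/
def locG (G : SimpleGraph V) (S : Finset V) : SimpleGraph (locSet G S) :=
  G.induce (locSet G S)

/-- The deletion `G ∖ v`, as an induced subgraph. -/
def Gdel (G : SimpleGraph V) (v : V) : SimpleGraph {u : V // u ≠ v} :=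
  G.induce {u | u ≠ v}

/-- `G` belongs to the class `W₂`: it is well-covered and for every vertex `v`,
`G ∖ v` is well-covered with `α(G ∖ v) = α(G)`. -/
def InW2 (G : SimpleGraph V) [Fintype V] : Prop :=
  WellCovered G ∧ ∀ v : V, WellCovered (Gdel G v) ∧ indNum (Gdel G v) = indNum G

/-- `δ*(v)`: the number of non-isolated vertices of the induced subgraph `H[N_H(v)]`. -/
def deltaStarV {T : Type*} (H : SimpleGraph T) [Fintype T] (v : T) : ℕ :=
  (Finset.univ.filter (fun u => H.Adj v u ∧ ∃ w, H.Adj v w ∧ H.Adj u w)).card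

/-- `2K₂`: two disjoint edges. -/
def twoK2 : SimpleGraph (Fin 4) := SimpleGraph.fromEdgeSet {s(0, 1), s(2, 3)}

/-- The join `G * H` of two disjoint graphs. -/
def joinG {α β : Type*} (G : SimpleGraph α) (H : SimpleGraph β) : SimpleGraph (α ⊕ β) where
  Adj x y :=
    match x, y with
    | Sum.inl a, Sum.inl b => G.Adj a b
    | Sum.inr a, Sum.inr b => H.Adj a b
    | Sum.inl _, Sum.inr _ => True
    | Sum.inr _, Sum.inl _ => True
  symm := ⟨by
    rintro (a | a) (b | b) h
    · exact G.adj_symm h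
    · trivial
    · trivial
    · exact H.adj_symm h⟩
  loopless := ⟨by
    rintro (a | a) h
    · exact G.irrefl h
    · exact H.irrefl h⟩

/-- `G` is pseudo-planar: for every independent set `S`, `δ*(G_S) ≤ 5` and
`G_S` is not isomorphic to `2K₂ * 2K₂`. -/
def PseudoPlanar (G : SimpleGraph V) [Fintype V] : Prop :=
  ∀ S ∈ indepC G,
    ((locSet G S).Nonempty → ∃ v : locSet G S, deltaStarV (locG G S) v ≤ 5) ∧
    IsEmpty (locG G S ≃g joinG twoK2 twoK2)

/-- `H` is a minor of `G`: there are disjoint nonempty connected branch sets in `G`,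
one for each vertex of `H`, with edges between branch sets of adjacent vertices. -/
def IsMinor {α β : Type*} (H : SimpleGraph β) (G : SimpleGraph α) : Prop :=
  ∃ B : β → Set α,
    (∀ u, (B u).Nonempty) ∧ (∀ u, (G.induce (B u)).Connected) ∧
    (∀ u w, u ≠ w → Disjoint (B u) (B w)) ∧
    (∀ u w, H.Adj u w → ∃ x ∈ B u, ∃ y ∈ B w, G.Adj x y)

def K5 : SimpleGraph (Fin 5) := ⊤

def K33 : SimpleGraph (Fin 3 ⊕ Fin 3) := completeBipartiteGraph (Fin 3) (Fin 3)

/-- Planarity via Wagner's theorem: no `K₅` minor and no `K_{3,3}` minor. -/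
def Planar (G : SimpleGraph V) : Prop := ¬ IsMinor K5 G ∧ ¬ IsMinor K33 G

/-- The 5-cycle on `Fin 5`. -/
def C5 : SimpleGraph (Fin 5) :=
  SimpleGraph.fromEdgeSet {s(0, 1), s(1, 2), s(2, 3), s(3, 4), s(4, 0)}

/-- A pentagon (5-cycle) with exactly one chord. -/
def pentChord : SimpleGraph (Fin 5) :=
  SimpleGraph.fromEdgeSet {s(0, 1), s(1, 2), s(2, 3), s(3, 4), s(4, 0), s(1, 3)}

/-- The bowtie: two triangles sharing exactly one vertex. -/
def bowtie : SimpleGraph (Fin 5) :=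
  SimpleGraph.fromEdgeSet {s(0, 1), s(1, 2), s(2, 0), s(1, 3), s(3, 4), s(4, 1)}

/-- The possible chords of the 5-cycle `C5`. -/
def chordSet : Finset (Sym2 (Fin 5)) := {s(0, 2), s(0, 3), s(1, 3), s(1, 4), s(2, 4)}

/-- The simplicial boundary map on chains (with coefficients in `k`),
sending `e_F ↦ Σ_{v ∈ F} (-1)^{pos of v in F} e_{F ∖ v}`. -/
def bdry (k : Type*) [Field k] [LinearOrder V] : (Finset V →₀ k) →ₗ[k] (Finset V →₀ k) :=
  Finsupp.lsum k fun F => (LinearMap.id : k →ₗ[k] k).smulRight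
    (∑ v ∈ F, ((-1 : k) ^ (F.filter (fun w => w < v)).card) • Finsupp.single (F.erase v) (1 : k))

/-- The submodule of `c`-chains of `Δ`: spanned by basis elements of faces of cardinality `c`. -/
def chainsSub (k : Type*) [Field k] (Δ : Finset (Finset V)) (c : ℕ) :
    Submodule k (Finset V →₀ k) :=
  Submodule.span k {x | ∃ F ∈ Δ, F.card = c ∧ x = Finsupp.single F (1 : k)}

/-- Vanishing of the reduced simplicial homology `H̃_{c-1}(Δ; k)`:
every cycle supported on faces of cardinality `c` is a boundary. -/
def HVanish (k : Type*) [Field k] [LinearOrder V] (Δ : Finset (Finset V)) (c : ℕ) : Prop :=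
  ∀ ω ∈ chainsSub k Δ c, bdry k ω = 0 → ∃ η ∈ chainsSub k Δ (c + 1), bdry k η = ω

/-- Cohen–Macaulayness of `Δ` over `k`, via Reisner's criterion:
`H̃_i(lk_Δ F; k) = 0` for all faces `F` and all `i < dim lk_Δ F`. -/
def IsCM (k : Type*) [Field k] [LinearOrder V] (Δ : Finset (Finset V)) : Prop :=
  ∀ F ∈ Δ, ∀ c : ℕ, (c : ℤ) - 1 < dimC (link Δ F) → HVanish k (link Δ F) c

/-- The core of `Δ`: the restriction of `Δ` to the vertices `x` with `st_Δ(x) ≠ Δ`. -/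
def coreC (Δ : Finset (Finset V)) : Finset (Finset V) :=
  Δ.filter (fun F => ∀ x ∈ F, ∃ H ∈ Δ, H ∪ {x} ∉ Δ)

/-- Gorensteinness of `Δ` over `k`, via Stanley's criterion:
`core Δ` is a Cohen–Macaulay Euler complex. -/
def IsGor (k : Type*) [Field k] [LinearOrder V] (Δ : Finset (Finset V)) : Prop :=
  IsCM k (coreC Δ) ∧ Eulerian (coreC Δ)

/-- Connectedness of `Δ` (all vertices of `V` being vertices of `Δ`):
its 1-skeleton graph is connected. -/
def ComplexConnected (Δ : Finset (Finset V)) : Prop :=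
  (SimpleGraph.fromRel fun a b => ({a, b} : Finset V) ∈ Δ).Connected

/-- `Δ` is connected in codimension one. -/
def ConnCodimOne (Δ : Finset (Finset V)) : Prop :=
  ∀ F ∈ facets Δ, ∀ H ∈ facets Δ,
    Relation.ReflTransGen
      (fun A B => A ∈ facets Δ ∧ B ∈ facets Δ ∧ (A ∩ B).card = maxCard Δ - 1) F H

/-- The graph obtained from `H` and a vertex `x` by adding new vertices `a, b, c`
(coded `0, 1, 2 : Fin 3`), joining `a` to `b` and to every neighbor of `x`,
`b` to `c`, and `c` to `x`. -/
def extGraph (H : SimpleGraph V) (x : V) : SimpleGraph (V ⊕ Fin 3) :=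
  SimpleGraph.fromRel fun p q =>
    match p, q with
    | Sum.inl u, Sum.inl w => H.Adj u w
    | Sum.inl u, Sum.inr i => (i = 0 ∧ H.Adj u x) ∨ (i = 2 ∧ u = x)
    | Sum.inr i, Sum.inr j => (i = 0 ∧ j = 1) ∨ (i = 1 ∧ j = 2)
    | Sum.inr _, Sum.inl _ => False

end

/-!
A maximal independent set `I` of the extension meets `{a, b, c}` in `{b}`, `{a, c}`, `{a}` or
`{c}`, since `b` must have a neighbour in `I`. Accordingly, its trace on `H` is a maximal
independent set of `H`; becomes one after adding `x`; is one because `c` forces `x ∈ I`; or is a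
maximal independent set of `H ∖ x`. As `H ∈ W₂`, each of these has `α(H)` elements, so every
maximal independent set of the extension has `α(H) + 1` elements, which gives both claims.
-/

section IndependentSets

variable {W : Type*} [Fintype W] {G : SimpleGraph W} {s : Finset W}

theorem mem_indepC_iff : s ∈ indepC G ↔ ∀ a ∈ s, ∀ b ∈ s, ¬ G.Adj a b := by
  simp [indepC]

def Dominates (G : SimpleGraph W) (s : Finset W) : Prop :=
  ∀ u ∉ s, ∃ w ∈ s, G.Adj u w

theorem dominates_of_maximal (hs : s ∈ indepC G) (hmax : ∀ t ∈ indepC G, s ⊆ t → s = t) :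
    Dominates G s := by
  intro u hu
  by_contra! hfree
  have hins : insert u s ∈ indepC G := by
    rw [mem_indepC_iff] at hs ⊢
    simp only [Finset.mem_insert, forall_eq_or_imp]
    exact ⟨⟨G.loopless.irrefl u, hfree⟩, fun a ha => ⟨fun h => hfree a ha h.symm, hs a ha⟩⟩
  exact hu (hmax _ hins (Finset.subset_insert u s) ▸ Finset.mem_insert_self u s)

theorem WellCovered.card_eq_of_dominates (hG : WellCovered G) (hs : s ∈ indepC G)
    (hdom : Dominates G s) : s.card = indNum G := by
  refine hG s hs fun t ht hst => Finset.Subset.antisymm hst fun u hu => ?_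
  by_contra hus
  obtain ⟨w, hw, hadj⟩ := hdom u hus
  exact mem_indepC_iff.1 ht u hu w (hst hw) hadj

theorem indNum_eq_and_wellCovered_of_forall_dominates {n : ℕ}
    (h : ∀ s ∈ indepC G, Dominates G s → s.card = n) : indNum G = n ∧ WellCovered G := by
  obtain ⟨s, hs, hmax⟩ := (indepC G).exists_mem_eq_sup ⟨∅, by simp [indepC]⟩ Finset.card
  have hmaximal : ∀ t ∈ indepC G, s ⊆ t → s = t := fun t ht hst =>
    Finset.eq_of_subset_of_card_le hst (hmax ▸ Finset.le_sup ht)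
  have hn : indNum G = n := hmax.trans (h s hs (dominates_of_maximal hs hmaximal))
  exact ⟨hn, fun t ht htmax => hn ▸ h t ht (dominates_of_maximal ht htmax)⟩

theorem card_eq_indNum_of_dominates_of_notMem {v : W} (hdel : WellCovered (Gdel G v))
    (hα : indNum (Gdel G v) = indNum G) (hs : s ∈ indepC G) (hv : v ∉ s)
    (hdom : ∀ u ∉ s, u ≠ v → ∃ w ∈ s, G.Adj u w) : s.card = indNum G := by
  have hcard : (s.subtype (· ≠ v)).card = s.card := by
    rw [Finset.card_subtype, Finset.filter_true_of_mem fun u hu => ne_of_mem_of_not_mem hu hv]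
  rw [← hcard, ← hα]
  refine hdel.card_eq_of_dominates ?_ fun u hu => ?_
  · rw [mem_indepC_iff] at hs ⊢
    intro a ha b hb
    exact hs a (Finset.mem_subtype.1 ha) b (Finset.mem_subtype.1 hb)
  · obtain ⟨w, hw, hadj⟩ := hdom u (mt Finset.mem_subtype.2 hu) u.2
    exact ⟨⟨w, fun hwv => hv (hwv ▸ hw)⟩, Finset.mem_subtype.2 hw, hadj⟩

end IndependentSets

section ExtGraph

variable {V : Type*} {H : SimpleGraph V} {x : V} {I : Finset (V ⊕ Fin 3)}

@[simp]
theorem extGraph_adj_inl_inl {u w : V} :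
    (extGraph H x).Adj (.inl u) (.inl w) ↔ H.Adj u w := by
  simp only [extGraph, SimpleGraph.fromRel_adj, ne_eq, Sum.inl.injEq]
  exact ⟨fun ⟨_, h⟩ => h.elim id SimpleGraph.Adj.symm, fun h => ⟨h.ne, .inl h⟩⟩

@[simp]
theorem extGraph_adj_inl_inr {u : V} {i : Fin 3} :
    (extGraph H x).Adj (.inl u) (.inr i) ↔ i = 0 ∧ H.Adj u x ∨ i = 2 ∧ u = x := by
  simp [extGraph]

@[simp]
theorem extGraph_adj_inr_inl {u : V} {i : Fin 3} :
    (extGraph H x).Adj (.inr i) (.inl u) ↔ i = 0 ∧ H.Adj u x ∨ i = 2 ∧ u = x := by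
  rw [SimpleGraph.adj_comm, extGraph_adj_inl_inr]

@[simp]
theorem extGraph_adj_inr_inr {i j : Fin 3} :
    (extGraph H x).Adj (.inr i) (.inr j) ↔
      i = 0 ∧ j = 1 ∨ i = 1 ∧ j = 0 ∨ i = 1 ∧ j = 2 ∨ i = 2 ∧ j = 1 := by
  simp only [extGraph, SimpleGraph.fromRel_adj]
  fin_cases i <;> fin_cases j <;> simp

theorem dominates_extGraph_inl (hdom : Dominates (extGraph H x) I) {u : V}
    (hu : u ∉ I.toLeft) :
    (∃ w ∈ I.toLeft, H.Adj u w) ∨ (.inr 0 ∈ I ∧ H.Adj u x) ∨ (.inr 2 ∈ I ∧ u = x) := by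
  obtain ⟨w | i, hw, hadj⟩ := hdom (.inl u) (mt Finset.mem_toLeft.2 hu)
  · exact .inl ⟨w, Finset.mem_toLeft.2 hw, extGraph_adj_inl_inl.1 hadj⟩
  · rcases extGraph_adj_inl_inr.1 hadj with ⟨rfl, h⟩ | ⟨rfl, h⟩
    · exact .inr (.inl ⟨hw, h⟩)
    · exact .inr (.inr ⟨hw, h⟩)

variable [Fintype V]

theorem toLeft_mem_indepC (hI : I ∈ indepC (extGraph H x)) : I.toLeft ∈ indepC H := by
  rw [mem_indepC_iff] at hI ⊢
  intro u hu w hw hadj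
  exact hI _ (Finset.mem_toLeft.1 hu) _ (Finset.mem_toLeft.1 hw) (extGraph_adj_inl_inl.2 hadj)

theorem insert_toLeft_mem_indepC (hI : I ∈ indepC (extGraph H x)) (ha : .inr 0 ∈ I) :
    insert x I.toLeft ∈ indepC H := by
  have hJ := mem_indepC_iff.1 (toLeft_mem_indepC hI)
  rw [mem_indepC_iff] at hI ⊢
  have hxJ : ∀ w ∈ I.toLeft, ¬ H.Adj w x := fun w hw hwx =>
    hI _ (Finset.mem_toLeft.1 hw) _ ha (by simp [hwx])
  simp only [Finset.mem_insert, forall_eq_or_imp]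
  exact ⟨⟨H.loopless.irrefl x, fun w hw h => hxJ w hw h.symm⟩, fun w hw => ⟨hxJ w hw, hJ w hw⟩⟩

theorem card_eq_of_b_mem (hH : WellCovered H) (hI : I ∈ indepC (extGraph H x))
    (hdom : Dominates (extGraph H x) I) (hb : .inr 1 ∈ I) : I.card = indNum H + 1 := by
  have ha : .inr 0 ∉ I := fun ha => mem_indepC_iff.1 hI _ ha _ hb (by simp)
  have hc : .inr 2 ∉ I := fun hc => mem_indepC_iff.1 hI _ hb _ hc (by simp)
  have hR : I.toRight = {1} := by ext i; fin_cases i <;> simp [ha, hb, hc]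
  have hJ : I.toLeft.card = indNum H :=
    hH.card_eq_of_dominates (toLeft_mem_indepC hI) fun u hu => by
      simpa [ha, hc] using dominates_extGraph_inl hdom hu
  rw [← Finset.card_toLeft_add_card_toRight, hR, hJ, Finset.card_singleton]

theorem card_eq_of_a_mem_of_c_mem (hH : WellCovered H) (hI : I ∈ indepC (extGraph H x))
    (hdom : Dominates (extGraph H x) I) (ha : .inr 0 ∈ I) (hc : .inr 2 ∈ I) :
    I.card = indNum H + 1 := by
  have hb : .inr 1 ∉ I := fun hb => mem_indepC_iff.1 hI _ ha _ hb (by simp)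
  have hx : x ∉ I.toLeft := fun hx =>
    mem_indepC_iff.1 hI _ (Finset.mem_toLeft.1 hx) _ hc (by simp)
  have hR : I.toRight = {0, 2} := by ext i; fin_cases i <;> simp [ha, hb, hc]
  have hJ : (insert x I.toLeft).card = indNum H :=
    hH.card_eq_of_dominates (insert_toLeft_mem_indepC hI ha) fun u hu => by
      rw [Finset.mem_insert, not_or] at hu
      rcases dominates_extGraph_inl hdom hu.2 with ⟨w, hw, h⟩ | ⟨-, h⟩ | ⟨-, rfl⟩
      · exact ⟨w, Finset.mem_insert_of_mem hw, h⟩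
      · exact ⟨x, Finset.mem_insert_self x _, h⟩
      · exact absurd rfl hu.1
  rw [Finset.card_insert_of_notMem hx] at hJ
  rw [← Finset.card_toLeft_add_card_toRight, hR, Finset.card_pair (by decide), ← hJ]

theorem card_eq_of_a_mem_of_c_notMem (hH : WellCovered H) (hI : I ∈ indepC (extGraph H x))
    (hdom : Dominates (extGraph H x) I) (ha : .inr 0 ∈ I) (hb : .inr 1 ∉ I)
    (hc : .inr 2 ∉ I) : I.card = indNum H + 1 := by
  have hx : x ∈ I.toLeft := by
    obtain ⟨w | i, hw, hadj⟩ := hdom (.inr 2) hc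
    · obtain rfl : w = x := by simpa using hadj
      exact Finset.mem_toLeft.2 hw
    · revert hw hadj
      fin_cases i <;> simp [hb]
  have hR : I.toRight = {0} := by ext i; fin_cases i <;> simp [ha, hb, hc]
  have hJ : I.toLeft.card = indNum H :=
    hH.card_eq_of_dominates (toLeft_mem_indepC hI) fun u hu => by
      rcases dominates_extGraph_inl hdom hu with h | ⟨-, h⟩ | ⟨h, -⟩
      · exact h
      · exact ⟨x, hx, h⟩
      · exact absurd h hc
  rw [← Finset.card_toLeft_add_card_toRight, hR, hJ, Finset.card_singleton]

theorem card_eq_of_a_notMem_of_c_mem (hdel : WellCovered (Gdel H x))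
    (hα : indNum (Gdel H x) = indNum H) (hI : I ∈ indepC (extGraph H x))
    (hdom : Dominates (extGraph H x) I) (ha : .inr 0 ∉ I) (hb : .inr 1 ∉ I)
    (hc : .inr 2 ∈ I) : I.card = indNum H + 1 := by
  have hx : x ∉ I.toLeft := fun hx =>
    mem_indepC_iff.1 hI _ (Finset.mem_toLeft.1 hx) _ hc (by simp)
  have hR : I.toRight = {2} := by ext i; fin_cases i <;> simp [ha, hb, hc]
  have hJ : I.toLeft.card = indNum H :=
    card_eq_indNum_of_dominates_of_notMem hdel hα (toLeft_mem_indepC hI) hx fun u hu hux => by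
      rcases dominates_extGraph_inl hdom hu with h | ⟨h, -⟩ | ⟨-, h⟩
      · exact h
      · exact absurd h ha
      · exact absurd h hux
  rw [← Finset.card_toLeft_add_card_toRight, hR, hJ, Finset.card_singleton]

theorem card_eq_of_dominates_extGraph (hW2 : InW2 H) (hI : I ∈ indepC (extGraph H x))
    (hdom : Dominates (extGraph H x) I) : I.card = indNum H + 1 := by
  by_cases hb : .inr 1 ∈ I
  · exact card_eq_of_b_mem hW2.1 hI hdom hb
  have hac : .inr 0 ∈ I ∨ .inr 2 ∈ I := by
    obtain ⟨w | i, hw, hadj⟩ := hdom (.inr 1) hb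
    · simp at hadj
    · fin_cases i <;> simp_all
  by_cases ha : .inr 0 ∈ I <;> by_cases hc : .inr 2 ∈ I
  · exact card_eq_of_a_mem_of_c_mem hW2.1 hI hdom ha hc
  · exact card_eq_of_a_mem_of_c_notMem hW2.1 hI hdom ha hb hc
  · exact card_eq_of_a_notMem_of_c_mem (hW2.2 x).1 (hW2.2 x).2 hI hdom ha hb hc
  · exact absurd hac (by simp [ha, hc])

end ExtGraph

theorem stmt_19_general {V : Type*} [Fintype V] (H : SimpleGraph V) (hW2 : InW2 H) (x : V) :
    indNum (extGraph H x) = indNum H + 1 ∧ WellCovered (extGraph H x) :=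
  indNum_eq_and_wellCovered_of_forall_dominates fun _ hI hdom =>
    card_eq_of_dominates_extGraph hW2 hI hdom

theorem stmt_19 {V : Type*} [Fintype V] (H : SimpleGraph V) (hW2 : InW2 H)
    (hni : ∀ v : V, ∃ u, H.Adj v u) (x : V) :
    indNum (extGraph H x) = indNum H + 1 ∧ WellCovered (extGraph H x) :=
  stmt_19_general H hW2 x
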